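/- arXiv:2211.04112 — 6 statements merged into one kernel-verified Lean document; each statement's English description precedes it below -/
import Mathlib

section
/- There exists an absolute constant C such that for every integer k ≥ 1, every permutation matrix π of length k with 90-degree counterclockwise rotation π', and every n that is a power of 4k², one has ex(n,π) ≤ C · n · k³ · (f(4k²,π) + f(4k²,π')). -/
/-- Matrices are written column-first: `M i j` is the entry in column `i` and row `j`
(rows ordered bottom-to-top). `M` contains the pattern `P` if there are strictly
increasing sequences of columns and of rows of `M` hitting a 1-entry of `M`
wherever `P` has a 1-entry. -/
def contains {c r a b : ℕ} (M : Fin c → Fin r → Bool) (P : Fin a → Fin b → Bool) : Prop :=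
  ∃ (ci : Fin a → Fin c) (ri : Fin b → Fin r),
    StrictMono ci ∧ StrictMono ri ∧ ∀ i j, P i j = true → M (ci i) (ri j) = true

def avoids {c r a b : ℕ} (M : Fin c → Fin r → Bool) (P : Fin a → Fin b → Bool) : Prop :=
  ¬ contains M P

/-- The number of 1-entries of a 0/1 matrix. -/
def ones {c r : ℕ} (M : Fin c → Fin r → Bool) : ℕ :=
  (Finset.univ.filter (fun p : Fin c × Fin r => M p.1 p.2 = true)).card

/-- A permutation matrix of length `k`: exactly one 1-entry in each row and column. -/
def isPermMat {k : ℕ} (P : Fin k → Fin k → Bool) : Prop :=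
  ∃ σ : Equiv.Perm (Fin k), ∀ i j, P i j = true ↔ σ i = j

/-- `exRC r c P`: the maximum number of 1-entries in a 0/1 matrix with `r` rows and
`c` columns avoiding `P`. -/
noncomputable def exRC (r c : ℕ) {a b : ℕ} (P : Fin a → Fin b → Bool) : ℕ :=
  sSup { m | ∃ M : Fin c → Fin r → Bool, avoids M P ∧ ones M = m }

/-- `exN n P`: the maximum number of 1-entries in an `n × n` 0/1 matrix avoiding `P`. -/
noncomputable def exN (n : ℕ) {a b : ℕ} (P : Fin a → Fin b → Bool) : ℕ := exRC n n P

/-- `fExt c P` for a length-`k` permutation matrix `P`: the maximum number `r` of rows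
of a 0/1 matrix with `r` rows and `c` columns avoiding `P` in which every row has at
least `2k` 1-entries. -/
noncomputable def fExt (c : ℕ) {k : ℕ} (P : Fin k → Fin k → Bool) : ℕ :=
  sSup { r | ∃ M : Fin c → Fin r → Bool, avoids M P ∧
    ∀ j : Fin r, 2 * k ≤ (Finset.univ.filter (fun i : Fin c => M i j = true)).card }

/-- Rotation by 90 degrees counterclockwise. -/
def rot90 {k : ℕ} (P : Fin k → Fin k → Bool) : Fin k → Fin k → Bool :=
  fun i j => P j i.rev

/-- `isDleft P Q`: `Q` is obtained from `P` by deleting the leftmost column together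
with the row containing that column's 1-entry. -/
def isDleft {k : ℕ} (P : Fin (k+1) → Fin (k+1) → Bool) (Q : Fin k → Fin k → Bool) : Prop :=
  ∃ r0 : Fin (k+1), P 0 r0 = true ∧ ∀ i j, Q i j = P i.succ (r0.succAbove j)

/-- `isDright P Q`: `Q` is obtained from `P` by deleting the rightmost column together
with the row containing that column's 1-entry. -/
def isDright {k : ℕ} (P : Fin (k+1) → Fin (k+1) → Bool) (Q : Fin k → Fin k → Bool) : Prop :=
  ∃ r0 : Fin (k+1), P (Fin.last k) r0 = true ∧ ∀ i j, Q i j = P i.castSucc (r0.succAbove j)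

/-- The global index of the `a`-th column (resp. row) inside the `i`-th group of `s`
consecutive columns (resp. rows). -/
def blockIdx {s n' : ℕ} (i : Fin n') (a : Fin s) : Fin (s * n') :=
  ⟨i.1 * s + a.1, by
    have ha := a.2
    have hi : i.1 + 1 ≤ n' := i.2
    have h1 : (i.1 + 1) * s ≤ n' * s := Nat.mul_le_mul hi (le_refl s)
    have h2 : (i.1 + 1) * s = i.1 * s + s := Nat.succ_mul _ _
    have h3 : n' * s = s * n' := Nat.mul_comm _ _
    omega⟩

open Finset in
lemma ones_le {c r : ℕ} (M : Fin c → Fin r → Bool) : ones M ≤ c * r := by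
  unfold ones
  calc (Finset.univ.filter _).card ≤ (Finset.univ : Finset (Fin c × Fin r)).card :=
        Finset.card_filter_le _ _
    _ = c * r := by simp

lemma permMat_entry {k : ℕ} {π : Fin k → Fin k → Bool} (hπ : isPermMat π) (hk : 1 ≤ k) :
    ∃ i j, π i j = true := by
  obtain ⟨σ, hσ⟩ := hπ
  have : 0 < k := hk
  exact ⟨⟨0, this⟩, σ ⟨0, this⟩, (hσ _ _).mpr rfl⟩

lemma zero_avoids {c r k : ℕ} {π : Fin k → Fin k → Bool} (hπ : isPermMat π) (hk : 1 ≤ k) :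
    avoids (fun (_ : Fin c) (_ : Fin r) => false) π := by
  rintro ⟨ci, ri, _, _, h⟩
  obtain ⟨i, j, hij⟩ := permMat_entry hπ hk
  exact absurd (h i j hij) (by simp)

lemma exRC_nonempty {c r k : ℕ} {π : Fin k → Fin k → Bool} (hπ : isPermMat π) (hk : 1 ≤ k) :
    Set.Nonempty { m | ∃ M : Fin c → Fin r → Bool, avoids M π ∧ ones M = m } :=
  ⟨ones (fun (_ : Fin c) (_ : Fin r) => false), ⟨_, zero_avoids hπ hk, rfl⟩⟩

lemma exRC_le {c r k : ℕ} {π : Fin k → Fin k → Bool} (hπ : isPermMat π) (hk : 1 ≤ k)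
    {B : ℕ} (h : ∀ M : Fin c → Fin r → Bool, avoids M π → ones M ≤ B) :
    exRC r c π ≤ B := by
  apply csSup_le (exRC_nonempty hπ hk)
  rintro m ⟨M, hM, rfl⟩
  exact h M hM

lemma le_exRC {c r a b : ℕ} {P : Fin a → Fin b → Bool} {M : Fin c → Fin r → Bool}
    (hM : avoids M P) : ones M ≤ exRC r c P := by
  have hb : BddAbove { m | ∃ N : Fin c → Fin r → Bool, avoids N P ∧ ones N = m } := by
    refine ⟨c * r, ?_⟩
    rintro m ⟨N, _, rfl⟩
    exact ones_le N
  exact le_csSup hb ⟨M, hM, rfl⟩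
open Finset in
lemma rows_le {c r k : ℕ} (hk : 1 ≤ k) (Q : Fin k → Fin k → Bool) (M : Fin c → Fin r → Bool)
    (hrow : ∀ j : Fin r, 2 * k ≤ (Finset.univ.filter (fun i : Fin c => M i j = true)).card)
    (hav : avoids M Q) : r ≤ (k - 1) * 2 ^ c := by
  by_contra hr
  push_neg at hr
  have hcard : (Finset.univ : Finset (Finset (Fin c))).card * (k - 1) <
      (Finset.univ : Finset (Fin r)).card := by
    simpa [Finset.card_univ, Fintype.card_finset, Nat.mul_comm] using hr
  obtain ⟨T, -, hT⟩ := Finset.exists_lt_card_fiber_of_mul_lt_card_of_maps_to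
    (f := fun j : Fin r => Finset.univ.filter (fun i : Fin c => M i j = true))
    (fun a _ => Finset.mem_univ _) hcard
  have hTk : k ≤ (Finset.univ.filter
      (fun j : Fin r => Finset.univ.filter (fun i : Fin c => M i j = true) = T)).card := by
    omega
  obtain ⟨R, hRsub, hRcard⟩ := Finset.exists_subset_card_eq hTk
  have hRne : R.Nonempty := by
    rw [← Finset.card_pos, hRcard]; exact hk
  obtain ⟨j0, hj0⟩ := hRne
  have hj0' := hRsub hj0
  simp only [Finset.mem_filter] at hj0'
  have hTcard : k ≤ T.card := by
    have := hrow j0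
    rw [hj0'.2] at this
    omega
  obtain ⟨Tc, hTcsub, hTccard⟩ := Finset.exists_subset_card_eq hTcard
  apply hav
  refine ⟨fun i => Tc.orderEmbOfFin hTccard i, fun j => R.orderEmbOfFin hRcard j,
    (Tc.orderEmbOfFin hTccard).strictMono, (R.orderEmbOfFin hRcard).strictMono, ?_⟩
  intro i j _
  have hjR : R.orderEmbOfFin hRcard j ∈ R := Finset.orderEmbOfFin_mem _ _ _
  have hjR' := hRsub hjR
  simp only [Finset.mem_filter] at hjR'
  have hiT : Tc.orderEmbOfFin hTccard i ∈ T := hTcsub (Finset.orderEmbOfFin_mem _ _ _)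
  rw [← hjR'.2] at hiT
  simpa using hiT

lemma le_fExt {c r k : ℕ} (hk : 1 ≤ k) {Q : Fin k → Fin k → Bool}
    (M : Fin c → Fin r → Bool) (hav : avoids M Q)
    (hrow : ∀ j : Fin r, 2 * k ≤ (Finset.univ.filter (fun i : Fin c => M i j = true)).card) :
    r ≤ fExt c Q := by
  have hb : BddAbove { r | ∃ M : Fin c → Fin r → Bool, avoids M Q ∧
      ∀ j : Fin r, 2 * k ≤ (Finset.univ.filter (fun i : Fin c => M i j = true)).card } := by
    refine ⟨(k - 1) * 2 ^ c, ?_⟩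
    rintro r ⟨M, hM, hr⟩
    exact rows_le hk Q M hr hM
  exact le_csSup hb ⟨M, hav, hrow⟩

lemma fExt_pos {k : ℕ} (hk : 2 ≤ k) (π : Fin k → Fin k → Bool) :
    1 ≤ fExt (4 * k ^ 2) π := by
  apply le_fExt (by omega) (fun (_ : Fin (4 * k ^ 2)) (_ : Fin 1) => true)
  · rintro ⟨ci, ri, -, hri, -⟩
    have h01 : (⟨0, by omega⟩ : Fin k) < ⟨1, by omega⟩ := by
      simp [Fin.lt_def]
    have := hri h01
    exact absurd this (by omega)
  · intro j
    have h : (Finset.univ.filter (fun _ : Fin (4 * k ^ 2) => (true : Bool) = true)).card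
        = 4 * k ^ 2 := by simp
    rw [h]; nlinarith
lemma blockIdx_lt {s n' : ℕ} {I I' : Fin n'} (h : I < I') (a a' : Fin s) :
    blockIdx I a < blockIdx I' a' := by
  have ha := a.2
  have ha' := a'.2
  have hII' : I.1 + 1 ≤ I'.1 := h
  have h1 : (I.1 + 1) * s ≤ I'.1 * s := Nat.mul_le_mul_right s hII'
  have h2 : (I.1 + 1) * s = I.1 * s + s := Nat.succ_mul _ _
  show (I.1 * s + a.1) < (I'.1 * s + a'.1)
  omega

lemma blockIdx_lt_same {s n' : ℕ} (I : Fin n') {a a' : Fin s} (h : a < a') :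
    blockIdx I a < blockIdx I a' := by
  have : a.1 < a'.1 := h
  show (I.1 * s + a.1) < (I.1 * s + a'.1)
  omega

lemma blockIdx_inj {s n' : ℕ} :
    Function.Injective (fun p : Fin n' × Fin s => blockIdx p.1 p.2) := by
  rintro ⟨I, a⟩ ⟨I', a'⟩ h
  simp only at h
  rcases lt_trichotomy I I' with hlt | heq | hgt
  · exact absurd h (ne_of_lt (blockIdx_lt hlt a a'))
  · subst heq
    have : I.1 * s + a.1 = I.1 * s + a'.1 := congrArg Fin.val h
    have : a.1 = a'.1 := by omega
    exact Prod.ext rfl (Fin.ext this)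
  · exact absurd h.symm (ne_of_lt (blockIdx_lt hgt a' a))

lemma blockIdx_bij {s n' : ℕ} :
    Function.Bijective (fun p : Fin n' × Fin s => blockIdx p.1 p.2) := by
  rw [Fintype.bijective_iff_injective_and_card]
  exact ⟨blockIdx_inj, by simp [Nat.mul_comm]⟩

lemma sum_blocks {s n' : ℕ} (h : Fin (s * n') → ℕ) :
    ∑ i, h i = ∑ I : Fin n', ∑ a : Fin s, h (blockIdx I a) := by
  have h1 : ∑ p : Fin n' × Fin s, h (blockIdx p.1 p.2) = ∑ i, h i :=
    Fintype.sum_bijective _ blockIdx_bij _ _ (fun p => rfl)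
  rw [← h1, Fintype.sum_prod_type]

/-- number of ones inside block (I,J) -/
def onesBlock {s n' : ℕ} (M : Fin (s * n') → Fin (s * n') → Bool) (I J : Fin n') : ℕ :=
  (Finset.univ.filter
    (fun p : Fin s × Fin s => M (blockIdx I p.1) (blockIdx J p.2) = true)).card

def nzCols {s n' : ℕ} (M : Fin (s * n') → Fin (s * n') → Bool) (I J : Fin n') : ℕ :=
  (Finset.univ.filter
    (fun a : Fin s => ∃ b, M (blockIdx I a) (blockIdx J b) = true)).card

def nzRows {s n' : ℕ} (M : Fin (s * n') → Fin (s * n') → Bool) (I J : Fin n') : ℕ :=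
  (Finset.univ.filter
    (fun b : Fin s => ∃ a, M (blockIdx I a) (blockIdx J b) = true)).card

lemma ones_eq_sum_blocks {s n' : ℕ} (M : Fin (s * n') → Fin (s * n') → Bool) :
    ones M = ∑ I : Fin n', ∑ J : Fin n', onesBlock M I J := by
  unfold ones onesBlock
  rw [Finset.card_filter]
  rw [Fintype.sum_prod_type]
  rw [sum_blocks (fun i => ∑ j, if M i j = true then 1 else 0)]
  have : ∀ I : Fin n', ∀ a : Fin s,
      (∑ j, if M (blockIdx I a) j = true then 1 else 0) =
      ∑ J : Fin n', ∑ b : Fin s, if M (blockIdx I a) (blockIdx J b) = true then 1 else 0 :=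
    fun I a => sum_blocks _
  simp_rw [this]
  congr 1
  funext I
  rw [Finset.sum_comm]
  congr 1
  funext J
  rw [Finset.card_filter, Fintype.sum_prod_type]

lemma onesBlock_le_mul {s n' : ℕ} (M : Fin (s * n') → Fin (s * n') → Bool) (I J : Fin n') :
    onesBlock M I J ≤ nzCols M I J * nzRows M I J := by
  unfold onesBlock nzCols nzRows
  rw [← Finset.card_product]
  apply Finset.card_le_card
  intro p hp
  simp only [Finset.mem_filter, Finset.mem_univ, true_and] at hp
  simp only [Finset.mem_product, Finset.mem_filter, Finset.mem_univ, true_and]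
  exact ⟨⟨p.2, hp⟩, ⟨p.1, hp⟩⟩

lemma onesBlock_le_sq {s n' : ℕ} (M : Fin (s * n') → Fin (s * n') → Bool) (I J : Fin n') :
    onesBlock M I J ≤ s * s := by
  unfold onesBlock
  calc _ ≤ (Finset.univ : Finset (Fin s × Fin s)).card := Finset.card_filter_le _ _
    _ = s * s := by simp
lemma contraction_avoids {s n' k : ℕ} {π : Fin k → Fin k → Bool} (hπ : isPermMat π)
    (M : Fin (s * n') → Fin (s * n') → Bool) (hav : avoids M π) :
    avoids (fun I J : Fin n' =>
      decide (∃ a b, M (blockIdx I a) (blockIdx J b) = true)) π := by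
  rintro ⟨ci, ri, hci, hri, h⟩
  obtain ⟨σ, hσ⟩ := hπ
  have hw : ∀ i : Fin k, ∃ a b, M (blockIdx (ci i) a) (blockIdx (ri (σ i)) b) = true := by
    intro i
    have := h i (σ i) ((hσ i (σ i)).mpr rfl)
    simpa using this
  choose a b hab using hw
  apply hav
  refine ⟨fun i => blockIdx (ci i) (a i), fun j => blockIdx (ri j) (b (σ.symm j)),
    fun i i' hii' => blockIdx_lt (hci hii') _ _,
    fun j j' hjj' => blockIdx_lt (hri hjj') _ _, ?_⟩
  intro i j hij
  have hj : σ i = j := (hσ i j).mp hij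
  subst hj
  simpa using hab i

lemma wide_le {s n' k : ℕ} (hk : 1 ≤ k) {π : Fin k → Fin k → Bool} (hπ : isPermMat π)
    (M : Fin (s * n') → Fin (s * n') → Bool) (hav : avoids M π) (I : Fin n') :
    (Finset.univ.filter (fun J : Fin n' => 2 * k ≤ nzCols M I J)).card ≤ fExt s π := by
  set W := Finset.univ.filter (fun J : Fin n' => 2 * k ≤ nzCols M I J) with hW
  set emb := W.orderEmbOfFin (rfl : W.card = W.card) with hemb
  apply le_fExt hk (fun (x : Fin s) (t : Fin W.card) =>
    decide (∃ b, M (blockIdx I x) (blockIdx (emb t) b) = true))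
  · rintro ⟨ci, ri, hci, hri, h⟩
    obtain ⟨σ, hσ⟩ := hπ
    have hw : ∀ i : Fin k, ∃ b, M (blockIdx I (ci i)) (blockIdx (emb (ri (σ i))) b) = true := by
      intro i
      have := h i (σ i) ((hσ i (σ i)).mpr rfl)
      simpa using this
    choose b hb using hw
    apply hav
    refine ⟨fun i => blockIdx I (ci i), fun j => blockIdx (emb (ri j)) (b (σ.symm j)),
      fun i i' hii' => blockIdx_lt_same I (hci hii'),
      fun j j' hjj' => blockIdx_lt (emb.strictMono (hri hjj')) _ _, ?_⟩
    intro i j hij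
    have hj : σ i = j := (hσ i j).mp hij
    subst hj
    simpa using hb i
  · intro t
    have hmem : emb t ∈ W := Finset.orderEmbOfFin_mem _ _ _
    have hmem2 : 2 * k ≤ nzCols M I (emb t) := (Finset.mem_filter.mp hmem).2
    have : (Finset.univ.filter (fun x : Fin s =>
        (decide (∃ b, M (blockIdx I x) (blockIdx (emb t) b) = true)) = true)).card
        = nzCols M I (emb t) := by
      unfold nzCols
      congr 1
      apply Finset.filter_congr
      intro x _
      simp
    exact le_of_le_of_eq hmem2 this.symm

lemma tall_le {s n' k : ℕ} (hk : 1 ≤ k) {π : Fin k → Fin k → Bool} (hπ : isPermMat π)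
    (M : Fin (s * n') → Fin (s * n') → Bool) (hav : avoids M π) (J : Fin n') :
    (Finset.univ.filter (fun I : Fin n' => 2 * k ≤ nzRows M I J)).card
      ≤ fExt s (rot90 π) := by
  set T := Finset.univ.filter (fun I : Fin n' => 2 * k ≤ nzRows M I J) with hT
  set emb := T.orderEmbOfFin (rfl : T.card = T.card) with hemb
  apply le_fExt hk (fun (x : Fin s) (t : Fin T.card) =>
    decide (∃ y, M (blockIdx (emb t) y) (blockIdx J x.rev) = true))
  · rintro ⟨ci, ri, hci, hri, h⟩
    obtain ⟨σ, hσ⟩ := hπ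
    have hw : ∀ u : Fin k, ∃ y,
        M (blockIdx (emb (ri u)) y) (blockIdx J ((ci (σ u).rev).rev)) = true := by
      intro u
      have hrot : rot90 π ((σ u).rev) u = true := by
        unfold rot90
        rw [Fin.rev_rev]
        exact (hσ u (σ u)).mpr rfl
      have := h ((σ u).rev) u hrot
      simpa using this
    choose y hy using hw
    apply hav
    refine ⟨fun u => blockIdx (emb (ri u)) (y u),
      fun v => blockIdx J ((ci v.rev).rev),
      fun u u' huu' => blockIdx_lt (emb.strictMono (hri huu')) _ _, ?_, ?_⟩
    · intro v v' hvv'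
      apply blockIdx_lt_same
      rw [Fin.rev_lt_rev]
      exact hci (by rwa [Fin.rev_lt_rev])
    · intro u v huv
      have hv : σ u = v := (hσ u v).mp huv
      subst hv
      exact hy u
  · intro t
    have hmem : emb t ∈ T := Finset.orderEmbOfFin_mem _ _ _
    have hmem2 : 2 * k ≤ nzRows M (emb t) J := (Finset.mem_filter.mp hmem).2
    have : (Finset.univ.filter (fun x : Fin s =>
        (decide (∃ y, M (blockIdx (emb t) y) (blockIdx J x.rev) = true)) = true)).card
        = nzRows M (emb t) J := by
      unfold nzRows
      refine Finset.card_bij' (fun a _ => a.rev) (fun b _ => b.rev) ?_ ?_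
        (fun a _ => Fin.rev_rev a) (fun b _ => Fin.rev_rev b)
      · intro a ha
        simp only [Finset.mem_filter, Finset.mem_univ, true_and] at ha ⊢
        simpa using ha
      · intro b hb
        simp only [Finset.mem_filter, Finset.mem_univ, true_and] at hb ⊢
        simpa [Fin.rev_rev] using hb
    exact le_of_le_of_eq hmem2 this.symm
lemma block_pointwise {s n' k : ℕ} (M : Fin (s * n') → Fin (s * n') → Bool) (I J : Fin n') :
    onesBlock M I J ≤
      (2 * k - 1) ^ 2 *
        (if (∃ a b, M (blockIdx I a) (blockIdx J b) = true) then 1 else 0) +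
      s * s * ((if 2 * k ≤ nzCols M I J then 1 else 0) +
               (if 2 * k ≤ nzRows M I J then 1 else 0)) := by
  by_cases hw : 2 * k ≤ nzCols M I J
  · have h1 := onesBlock_le_sq M I J
    rw [if_pos hw]
    nlinarith [Nat.zero_le ((2 * k - 1) ^ 2 *
      (if (∃ a b, M (blockIdx I a) (blockIdx J b) = true) then 1 else 0)),
      Nat.zero_le (if 2 * k ≤ nzRows M I J then 1 else 0)]
  · by_cases ht : 2 * k ≤ nzRows M I J
    · have h1 := onesBlock_le_sq M I J
      rw [if_pos ht]
      nlinarith [Nat.zero_le ((2 * k - 1) ^ 2 *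
        (if (∃ a b, M (blockIdx I a) (blockIdx J b) = true) then 1 else 0)),
        Nat.zero_le (if 2 * k ≤ nzCols M I J then 1 else 0)]
    · rcases Nat.eq_zero_or_pos (onesBlock M I J) with h0 | h0
      · rw [h0]; exact Nat.zero_le _
      · have hex : ∃ a b, M (blockIdx I a) (blockIdx J b) = true := by
          obtain ⟨p, hp⟩ := Finset.card_pos.mp h0
          simp only [Finset.mem_filter, Finset.mem_univ, true_and] at hp
          exact ⟨p.1, p.2, hp⟩
        rw [if_pos hex]
        have h1 := onesBlock_le_mul M I J
        have h2 : nzCols M I J ≤ 2 * k - 1 := by omega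
        have h3 : nzRows M I J ≤ 2 * k - 1 := by omega
        have : onesBlock M I J ≤ (2 * k - 1) ^ 2 := by
          calc onesBlock M I J ≤ nzCols M I J * nzRows M I J := h1
            _ ≤ (2 * k - 1) * (2 * k - 1) := Nat.mul_le_mul h2 h3
            _ = (2 * k - 1) ^ 2 := (sq (2 * k - 1)).symm
        omega

lemma step_bound {k n' : ℕ} (hk : 1 ≤ k) {π : Fin k → Fin k → Bool} (hπ : isPermMat π) :
    exN ((4 * k ^ 2) * n') π ≤
      (2 * k - 1) ^ 2 * exN n' π +
      (4 * k ^ 2) * (4 * k ^ 2) * n' *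
        (fExt (4 * k ^ 2) π + fExt (4 * k ^ 2) (rot90 π)) := by
  set s : ℕ := 4 * k ^ 2 with hs
  apply exRC_le hπ hk
  intro M hav
  set B' : Fin n' → Fin n' → Bool :=
    fun I J => decide (∃ a b, M (blockIdx I a) (blockIdx J b) = true) with hB'
  have havB : avoids B' π := contraction_avoids hπ M hav
  have honesB : ones B' ≤ exN n' π := le_exRC havB
  have hsum : ones M = ∑ I : Fin n', ∑ J : Fin n', onesBlock M I J :=
    ones_eq_sum_blocks M
  have hpt : ∀ I J : Fin n', onesBlock M I J ≤
      (2 * k - 1) ^ 2 * (if B' I J = true then 1 else 0) +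
      s * s * ((if 2 * k ≤ nzCols M I J then 1 else 0) +
               (if 2 * k ≤ nzRows M I J then 1 else 0)) := by
    intro I J
    have := block_pointwise (k := k) M I J
    have heq : (if B' I J = true then (1:ℕ) else 0) =
        (if (∃ a b, M (blockIdx I a) (blockIdx J b) = true) then 1 else 0) := by
      simp [hB']
    rw [heq]
    exact this
  have hB'sum : ∑ I : Fin n', ∑ J : Fin n', (if B' I J = true then (1:ℕ) else 0)
      = ones B' := by
    unfold ones
    rw [Finset.card_filter, Fintype.sum_prod_type]
  have hWsum : ∀ I : Fin n',
      ∑ J : Fin n', (if 2 * k ≤ nzCols M I J then (1:ℕ) else 0) ≤ fExt s π := by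
    intro I
    have h := wide_le hk hπ M hav I
    calc ∑ J : Fin n', (if 2 * k ≤ nzCols M I J then (1:ℕ) else 0)
        = (Finset.univ.filter (fun J : Fin n' => 2 * k ≤ nzCols M I J)).card := by
          rw [Finset.card_filter]
      _ ≤ fExt s π := h
  have hTsum : ∀ J : Fin n',
      ∑ I : Fin n', (if 2 * k ≤ nzRows M I J then (1:ℕ) else 0) ≤ fExt s (rot90 π) := by
    intro J
    have h := tall_le hk hπ M hav J
    calc ∑ I : Fin n', (if 2 * k ≤ nzRows M I J then (1:ℕ) else 0)
        = (Finset.univ.filter (fun I : Fin n' => 2 * k ≤ nzRows M I J)).card := by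
          rw [Finset.card_filter]
      _ ≤ fExt s (rot90 π) := h
  calc ones M = ∑ I : Fin n', ∑ J : Fin n', onesBlock M I J := hsum
    _ ≤ ∑ I : Fin n', ∑ J : Fin n',
        ((2 * k - 1) ^ 2 * (if B' I J = true then 1 else 0) +
          s * s * ((if 2 * k ≤ nzCols M I J then 1 else 0) +
                   (if 2 * k ≤ nzRows M I J then 1 else 0))) := by
        apply Finset.sum_le_sum; intro I _
        apply Finset.sum_le_sum; intro J _
        exact hpt I J
    _ = (2 * k - 1) ^ 2 * (∑ I : Fin n', ∑ J : Fin n', (if B' I J = true then 1 else 0)) +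
        s * s * ((∑ I : Fin n', ∑ J : Fin n', (if 2 * k ≤ nzCols M I J then 1 else 0)) +
                 (∑ I : Fin n', ∑ J : Fin n', (if 2 * k ≤ nzRows M I J then 1 else 0))) := by
        simp only [Finset.sum_add_distrib, ← Finset.mul_sum]
    _ ≤ (2 * k - 1) ^ 2 * exN n' π +
        s * s * (n' * fExt s π + n' * fExt s (rot90 π)) := by
        apply Nat.add_le_add
        · exact Nat.mul_le_mul_left _ (le_of_le_of_eq (le_of_eq hB'sum) rfl |>.trans honesB)
        · apply Nat.mul_le_mul_left
          apply Nat.add_le_add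
          · calc ∑ I : Fin n', ∑ J : Fin n', (if 2 * k ≤ nzCols M I J then (1:ℕ) else 0)
                ≤ ∑ _I : Fin n', fExt s π := Finset.sum_le_sum (fun I _ => hWsum I)
              _ = n' * fExt s π := by simp [Finset.sum_const, Nat.smul_one_eq_cast]
          · rw [Finset.sum_comm]
            calc ∑ J : Fin n', ∑ I : Fin n', (if 2 * k ≤ nzRows M I J then (1:ℕ) else 0)
                ≤ ∑ _J : Fin n', fExt s (rot90 π) := Finset.sum_le_sum (fun J _ => hTsum J)
              _ = n' * fExt s (rot90 π) := by simp [Finset.sum_const]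
    _ = (2 * k - 1) ^ 2 * exN n' π +
        s * s * n' * (fExt s π + fExt s (rot90 π)) := by ring
lemma exN_one_le {k : ℕ} (hk : 1 ≤ k) {π : Fin k → Fin k → Bool} (hπ : isPermMat π) :
    exN 1 π ≤ 1 := by
  apply exRC_le hπ hk
  intro M _
  calc ones M ≤ 1 * 1 := ones_le M
    _ = 1 := by norm_num

lemma main_bound {k : ℕ} (hk : 2 ≤ k) {π : Fin k → Fin k → Bool} (hπ : isPermMat π) (e : ℕ) :
    exN ((4 * k ^ 2) ^ e) π ≤
      8 * k ^ 3 * (fExt (4 * k ^ 2) π + fExt (4 * k ^ 2) (rot90 π)) * (4 * k ^ 2) ^ e := by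
  have hk1 : 1 ≤ k := by omega
  have hf : 1 ≤ fExt (4 * k ^ 2) π + fExt (4 * k ^ 2) (rot90 π) := by
    have := fExt_pos hk π
    omega
  induction e with
  | zero =>
    simp only [pow_zero, mul_one]
    calc exN 1 π ≤ 1 := exN_one_le hk1 hπ
      _ ≤ 8 * k ^ 3 * (fExt (4 * k ^ 2) π + fExt (4 * k ^ 2) (rot90 π)) := by
          have h1 : 1 ≤ k ^ 3 := Nat.one_le_pow _ _ (by omega)
          calc 1 = 8 * 1 * 1 - 7 := by norm_num
            _ ≤ 8 * k ^ 3 * (fExt (4 * k ^ 2) π + fExt (4 * k ^ 2) (rot90 π)) := by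
                have := Nat.mul_le_mul (Nat.mul_le_mul_left 8 h1) hf
                omega
  | succ e ih =>
    have hstep := step_bound (n' := (4 * k ^ 2) ^ e) hk1 hπ
    have hpow : (4 * k ^ 2) ^ (e + 1) = (4 * k ^ 2) * (4 * k ^ 2) ^ e := by ring
    rw [hpow]
    set F := fExt (4 * k ^ 2) π + fExt (4 * k ^ 2) (rot90 π) with hF
    calc exN ((4 * k ^ 2) * (4 * k ^ 2) ^ e) π
        ≤ (2 * k - 1) ^ 2 * exN ((4 * k ^ 2) ^ e) π +
          (4 * k ^ 2) * (4 * k ^ 2) * (4 * k ^ 2) ^ e * F := hstep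
      _ ≤ (2 * k - 1) ^ 2 * (8 * k ^ 3 * F * (4 * k ^ 2) ^ e) +
          (4 * k ^ 2) * (4 * k ^ 2) * (4 * k ^ 2) ^ e * F :=
          Nat.add_le_add_right (Nat.mul_le_mul_left _ ih) _
      _ ≤ 8 * k ^ 3 * F * ((4 * k ^ 2) * (4 * k ^ 2) ^ e) := by
          obtain ⟨m, hm⟩ : ∃ m, 2 * k = m + 1 := ⟨2 * k - 1, by omega⟩
          have hsub : 2 * k - 1 = m := by omega
          rw [hsub]
          set P := (4 * k ^ 2) ^ e with hP
          have key : m ^ 2 * (8 * k ^ 3) + (4 * k ^ 2) * (4 * k ^ 2) ≤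
              8 * k ^ 3 * (4 * k ^ 2) := by
            have h3 : m ^ 2 + 2 * m + 1 = 4 * k ^ 2 := by
              have : (m + 1) * (m + 1) = (2 * k) * (2 * k) := by rw [hm]
              nlinarith [this]
            have h4 : (m ^ 2 + 2 * m + 1) * (8 * k ^ 3) = 4 * k ^ 2 * (8 * k ^ 3) := by
              rw [h3]
            have h5 : (2 * k) * (8 * k ^ 3) ≤ (2 * m + 1) * (8 * k ^ 3) :=
              Nat.mul_le_mul_right _ (by omega)
            nlinarith [h4, h5]
          calc m ^ 2 * (8 * k ^ 3 * F * P) + (4 * k ^ 2) * (4 * k ^ 2) * P * F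
              = (m ^ 2 * (8 * k ^ 3) + (4 * k ^ 2) * (4 * k ^ 2)) * (F * P) := by ring
            _ ≤ (8 * k ^ 3 * (4 * k ^ 2)) * (F * P) := Nat.mul_le_mul_right _ key
            _ = 8 * k ^ 3 * F * ((4 * k ^ 2) * P) := by ring

/-- There is an absolute constant `C` such that for every length-`k` permutation
matrix `π` with 90-degree counterclockwise rotation `π'`, and every `n` that is a
power of `4k²`, one has `ex(n,π) ≤ C · n · k³ · (f(4k²,π) + f(4k²,π'))`. -/
theorem stmt1 :
    ∃ C : ℕ,
      ∀ (k : ℕ), 1 ≤ k → ∀ (π : Fin k → Fin k → Bool), isPermMat π →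
        ∀ n e : ℕ, n = (4 * k ^ 2) ^ e →
          exN n π ≤ C * n * k ^ 3 * (fExt (4 * k ^ 2) π + fExt (4 * k ^ 2) (rot90 π)) := by
  use 8
  intro k hk π hπ n e hn
  rcases eq_or_lt_of_le hk with hk1 | hk2
  · -- k = 1
    have hk1' : k = 1 := hk1.symm
    subst hk1'
    have h0 : exN n π ≤ 0 := by
      apply exRC_le hπ hk
      intro M hav
      by_contra hpos
      push_neg at hpos
      have : 0 < ones M := hpos
      obtain ⟨p, hp⟩ := Finset.card_pos.mp this
      simp only [Finset.mem_filter, Finset.mem_univ, true_and] at hp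
      apply hav
      refine ⟨fun _ => p.1, fun _ => p.2, ?_, ?_, ?_⟩
      · intro a b h
        exact absurd (Subsingleton.elim a b) (ne_of_lt h)
      · intro a b h
        exact absurd (Subsingleton.elim a b) (ne_of_lt h)
      · intro i j _
        exact hp
    omega
  · -- k ≥ 2
    have hb := main_bound hk2 hπ e
    rw [← hn] at hb
    calc exN n π ≤ 8 * k ^ 3 * (fExt (4 * k ^ 2) π + fExt (4 * k ^ 2) (rot90 π)) * n := hb
      _ = 8 * n * k ^ 3 * (fExt (4 * k ^ 2) π + fExt (4 * k ^ 2) (rot90 π)) := by ring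
end

section
/- Let s, n' be positive integers, n = s·n', and let M be an n×n 0/1 matrix. Partition M into n'² blocks B_{ij} of size s×s, where B_{ij} consists of the i-th group of s consecutive columns and the j-th group of s consecutive rows. Define the n'×n' 0/1 matrix M'' by M''(i,j) = 1 if and only if B_{ij} contains at least one 1-entry. Then for every permutation matrix π: if M'' contains π, then M contains π. Consequently, if M avoids π then M'' avoids π. -/
/-- Block-contraction preserves pattern containment: if `M` is an `n×n` matrix with
`n = s·n'`, partitioned into `s×s` blocks `B_{ij}`, and `M''` is the `n'×n'` matrix
recording which blocks are non-empty, then for every permutation matrix `π`: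
if `M''` contains `π` then `M` contains `π`; consequently if `M` avoids `π` then
`M''` avoids `π`. -/
theorem stmt4 (s n' : ℕ) (hs : 0 < s) (hn' : 0 < n')
    (M : Fin (s * n') → Fin (s * n') → Bool)
    (M'' : Fin n' → Fin n' → Bool)
    (hM'' : ∀ i j, M'' i j = true ↔
      ∃ a b : Fin s, M (blockIdx i a) (blockIdx j b) = true)
    (k : ℕ) (π : Fin k → Fin k → Bool) (hπ : isPermMat π) :
    (contains M'' π → contains M π) ∧ (avoids M π → avoids M'' π) := by
  have main : contains M'' π → contains M π := by
    rintro ⟨ci, ri, hci, hri, h⟩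
    obtain ⟨σ, hσ⟩ := hπ
    have hsel : ∀ i : Fin k, ∃ a b : Fin s,
        M (blockIdx (ci i) a) (blockIdx (ri (σ i)) b) = true := by
      intro i
      exact (hM'' _ _).1 (h i (σ i) ((hσ i (σ i)).2 rfl))
    choose a b hab using hsel
    have mono : ∀ (f : Fin k → Fin n') (g : Fin k → Fin s), StrictMono f →
        StrictMono (fun i => (blockIdx (f i) (g i) : Fin (s * n'))) := by
      intro f g hf i i' hii
      have h1 : (f i).1 + 1 ≤ (f i').1 := hf hii
      have h2 : ((f i).1 + 1) * s ≤ (f i').1 * s := Nat.mul_le_mul_right s h1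
      have h3 : (g i).1 < s := (g i).2
      have h4 : (g i').1 < s := (g i').2
      simp only [blockIdx, Fin.lt_def]
      have h5 : ((f i).1 + 1) * s = (f i).1 * s + s := Nat.succ_mul _ _
      omega
    refine ⟨fun i => blockIdx (ci i) (a i),
            fun j => blockIdx (ri j) (b (σ.symm j)), mono _ _ hci, mono _ _ hri, ?_⟩
    intro i j hpij
    have hj : σ i = j := (hσ i j).1 hpij
    subst hj
    simpa [Equiv.symm_apply_apply] using hab i
  exact ⟨main, fun hM hcon => hM (main hcon)⟩
end

section
/- Let π be a permutation matrix of length k ≥ 1, let n = 4k²·n', and let M be an n×n 0/1 matrix that avoids π. Partition M into blocks B_{ij} of size 4k²×4k² (i-th group of 4k² consecutive columns, j-th group of 4k² consecutive rows), and call a block wide if at least 2k of its columns contain a 1-entry. Then for every fixed column-group index i, the number of row-group indices j such that B_{ij} is wide is at most f(4k², π). -/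
lemma allones_contains {c r k : ℕ} (π : Fin k → Fin k → Bool)
    (M : Fin c → Fin r → Bool) (S : Finset (Fin c)) (T : Finset (Fin r))
    (hS : k ≤ S.card) (hT : T.card = k)
    (hall : ∀ a ∈ S, ∀ b ∈ T, M a b = true) : contains M π := by
  obtain ⟨S', hS'sub, hS'⟩ := Finset.exists_subset_card_eq hS
  refine ⟨S'.orderEmbOfFin hS', T.orderEmbOfFin hT,
    (S'.orderEmbOfFin hS').strictMono, (T.orderEmbOfFin hT).strictMono, ?_⟩
  intro i j _
  exact hall _ (hS'sub (Finset.orderEmbOfFin_mem S' hS' i)) _ (Finset.orderEmbOfFin_mem T hT j)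

lemma rows_bound {c r k : ℕ} (π : Fin k → Fin k → Bool)
    (M : Fin c → Fin r → Bool) (hM : avoids M π)
    (hrow : ∀ j : Fin r, 2 * k ≤ (Finset.univ.filter (fun i : Fin c => M i j = true)).card) :
    r ≤ (k - 1) * Nat.choose c (2 * k) := by
  by_contra hlt
  push_neg at hlt
  have hf : ∀ j : Fin r, ∃ S : Finset (Fin c),
      S ⊆ Finset.univ.filter (fun i => M i j = true) ∧ S.card = 2 * k :=
    fun j => Finset.exists_subset_card_eq (hrow j)
  choose f hfsub hfcard using hf
  have hmaps : ∀ j ∈ (Finset.univ : Finset (Fin r)),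
      f j ∈ Finset.powersetCard (2 * k) (Finset.univ : Finset (Fin c)) := by
    intro j _
    simp [Finset.mem_powersetCard, hfcard j]
  have hcardlt : (Finset.powersetCard (2 * k) (Finset.univ : Finset (Fin c))).card * (k - 1)
      < (Finset.univ : Finset (Fin r)).card := by
    rw [Finset.card_powersetCard, Finset.card_univ, Finset.card_univ, Fintype.card_fin,
      Fintype.card_fin]
    have := Nat.mul_comm (k - 1) (Nat.choose c (2 * k))
    omega
  obtain ⟨S, hSmem, hfib⟩ := Finset.exists_lt_card_fiber_of_mul_lt_card_of_maps_to hmaps hcardlt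
  have hScard : S.card = 2 * k := (Finset.mem_powersetCard.mp hSmem).2
  have hk' : k ≤ (Finset.univ.filter (fun j : Fin r => f j = S)).card := by omega
  obtain ⟨T, hTsub, hTcard⟩ := Finset.exists_subset_card_eq hk'
  apply hM
  apply allones_contains π M S T (by omega) hTcard
  intro a ha b hb
  have hbfib := hTsub hb
  simp only [Finset.mem_filter] at hbfib
  have h1 : a ∈ f b := hbfib.2 ▸ ha
  have := hfsub b h1
  simpa using this

lemma blockIdx_lt_blockIdx {s n' : ℕ} {i i' : Fin n'} {a a' : Fin s}
    (h : i < i' ∨ (i = i' ∧ a < a')) : blockIdx i a < blockIdx i' a' := by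
  rcases h with h | ⟨h1, h2⟩
  · have hlt : i.1 < i'.1 := h
    have ha := a.2
    have := Nat.mul_le_mul_right s (show i.1 + 1 ≤ i'.1 from hlt)
    have h2 : (i.1 + 1) * s = i.1 * s + s := Nat.succ_mul _ _
    simp only [blockIdx, Fin.lt_def]
    omega
  · subst h1
    have : a.1 < a'.1 := h2
    simp only [blockIdx, Fin.lt_def]
    omega

/-- Let `π` be a length-`k` permutation matrix (`k ≥ 1`) and `M` an `n×n` matrix
avoiding `π`, where `n = 4k²·n'`, partitioned into `4k²×4k²` blocks `B_{ij}`.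
Call a block wide if at least `2k` of its columns contain a 1-entry. Then for every
fixed column-group index `i`, the number of row-group indices `j` such that `B_{ij}`
is wide is at most `f(4k², π)`. -/
theorem stmt5 (k : ℕ) (hk : 1 ≤ k) (π : Fin k → Fin k → Bool) (hπ : isPermMat π)
    (n' : ℕ) (hn' : 0 < n')
    (M : Fin (4 * k ^ 2 * n') → Fin (4 * k ^ 2 * n') → Bool) (hM : avoids M π)
    (i : Fin n') :
    (Finset.univ.filter (fun j : Fin n' =>
        2 * k ≤ (Finset.univ.filter (fun a : Fin (4 * k ^ 2) =>
          ∃ b : Fin (4 * k ^ 2), M (blockIdx i a) (blockIdx j b) = true)).card)).card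
      ≤ fExt (4 * k ^ 2) π := by
  classical
  set W := Finset.univ.filter (fun j : Fin n' =>
      2 * k ≤ (Finset.univ.filter (fun a : Fin (4 * k ^ 2) =>
        ∃ b : Fin (4 * k ^ 2), M (blockIdx i a) (blockIdx j b) = true)).card) with hWdef
  let g : Fin W.card ↪o Fin n' := W.orderEmbOfFin rfl
  let N : Fin (4 * k ^ 2) → Fin W.card → Bool :=
    fun a j => decide (∃ b : Fin (4 * k ^ 2), M (blockIdx i a) (blockIdx (g j) b) = true)
  obtain ⟨σ, hσ⟩ := hπ
  have havoid : avoids N π := by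
    rintro ⟨ci, ri, hci, hri, hcon⟩
    have hex : ∀ j : Fin k, ∃ b : Fin (4 * k ^ 2),
        M (blockIdx i (ci (σ.symm j))) (blockIdx (g (ri j)) b) = true := by
      intro j
      have hπj : π (σ.symm j) j = true := (hσ _ _).mpr (σ.apply_symm_apply j)
      have := hcon _ _ hπj
      simpa [N] using this
    choose b hb using hex
    apply hM
    refine ⟨fun i' => blockIdx i (ci i'), fun j => blockIdx (g (ri j)) (b j), ?_, ?_, ?_⟩
    · intro x y hxy
      exact blockIdx_lt_blockIdx (Or.inr ⟨rfl, hci hxy⟩)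
    · intro x y hxy
      exact blockIdx_lt_blockIdx (Or.inl (g.strictMono (hri hxy)))
    · intro i' j' hp
      have h1 : σ i' = j' := (hσ i' j').mp hp
      have h2 : σ.symm j' = i' := by rw [← h1]; exact σ.symm_apply_apply i'
      have := hb j'
      rwa [h2] at this
  have hrows : ∀ j : Fin W.card,
      2 * k ≤ (Finset.univ.filter (fun a : Fin (4 * k ^ 2) => N a j = true)).card := by
    intro j
    have hmem : g j ∈ W := Finset.orderEmbOfFin_mem W rfl j
    have hcard := (Finset.mem_filter.mp hmem).2
    have heq : (Finset.univ.filter (fun a : Fin (4 * k ^ 2) => N a j = true)) =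
        (Finset.univ.filter (fun a : Fin (4 * k ^ 2) =>
          ∃ b : Fin (4 * k ^ 2), M (blockIdx i a) (blockIdx (g j) b) = true)) := by
      apply Finset.filter_congr
      intro a _
      simp [N]
    rw [heq]
    exact hcard
  have hmem : W.card ∈ { r | ∃ M' : Fin (4 * k ^ 2) → Fin r → Bool, avoids M' π ∧
      ∀ j : Fin r, 2 * k ≤ (Finset.univ.filter (fun i : Fin (4 * k ^ 2) =>
        M' i j = true)).card } := ⟨N, havoid, hrows⟩
  have hbdd : BddAbove { r | ∃ M' : Fin (4 * k ^ 2) → Fin r → Bool, avoids M' π ∧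
      ∀ j : Fin r, 2 * k ≤ (Finset.univ.filter (fun i : Fin (4 * k ^ 2) =>
        M' i j = true)).card } := by
    refine ⟨(k - 1) * Nat.choose (4 * k ^ 2) (2 * k), ?_⟩
    rintro r' ⟨M', hav, hr⟩
    exact rows_bound π M' hav hr
  exact le_csSup hbdd hmem
end

section
/- Let s, n' be positive integers, n = s·n', and let M be an n×n 0/1 matrix partitioned into blocks B_{ij} of size s×s (i-th group of s consecutive columns, j-th group of s consecutive rows). Fix a column-group index i and let Q_i be the 0/1 matrix with n' rows and s columns whose j-th row is the flattening of B_{ij}, i.e., Q_i(c,j) = 1 if and only if the c-th column of block B_{ij} contains a 1-entry. Then for every permutation matrix π: if Q_i contains π, then M contains π. -/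
/-- Flattening preserves pattern containment: with `M` an `n×n` matrix, `n = s·n'`,
partitioned into `s×s` blocks `B_{ij}`, fix a column-group index `i` and let `Q` be
the matrix with `n'` rows and `s` columns whose `j`-th row is the flattening of
`B_{ij}` (i.e. `Q c j = 1` iff the `c`-th column of `B_{ij}` contains a 1-entry).
Then for every permutation matrix `π`: if `Q` contains `π`, then `M` contains `π`. -/
theorem stmt6 (s n' : ℕ) (hs : 0 < s) (hn' : 0 < n')
    (M : Fin (s * n') → Fin (s * n') → Bool) (i : Fin n')
    (Q : Fin s → Fin n' → Bool)
    (hQ : ∀ (c : Fin s) (j : Fin n'), Q c j = true ↔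
      ∃ b : Fin s, M (blockIdx i c) (blockIdx j b) = true)
    (k : ℕ) (π : Fin k → Fin k → Bool) (hπ : isPermMat π) :
    contains Q π → contains M π := by
  rintro ⟨ci, ri, hci, hri, h⟩
  obtain ⟨σ, hσ⟩ := hπ
  have hrow : ∀ j : Fin k, ∃ b : Fin s,
      M (blockIdx i (ci (σ.symm j))) (blockIdx (ri j) b) = true := by
    intro j
    have hp : π (σ.symm j) j = true := (hσ _ _).mpr (σ.apply_symm_apply j)
    exact (hQ _ _).mp (h _ _ hp)
  choose b hb using hrow
  refine ⟨fun a => blockIdx i (ci a), fun j => blockIdx (ri j) (b j), ?_, ?_, ?_⟩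
  · intro a1 a2 hlt
    have := hci hlt
    simp only [blockIdx, Fin.lt_def] at this ⊢
    omega
  · intro j1 j2 hlt
    have h1 : (ri j1).1 + 1 ≤ (ri j2).1 := hri hlt
    have h2 : ((ri j1).1 + 1) * s ≤ (ri j2).1 * s := Nat.mul_le_mul_right s h1
    have h3 : ((ri j1).1 + 1) * s = (ri j1).1 * s + s := Nat.succ_mul _ _
    have hb1 : (b j1).1 < s := (b j1).2
    simp only [blockIdx, Fin.lt_def]
    omega
  · intro a j hpi
    have ha : a = σ.symm j := by
      have := (hσ a j).mp hpi
      exact (Equiv.symm_apply_eq σ).mpr (id this.symm) |>.symm ▸ by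
        simp [← this]
    rw [ha]
    exact hb j
end

section
/- Let π be a left-reducible permutation matrix of length k ≥ 2 (i.e., π has a 1-entry at position (1,1) or (1,k), writing matrices column-first with rows bottom-to-top), and let π̂ be any permutation matrix with dleft(π) = dleft(π̂). Then for every integer c ≥ 2k, f(c,π) ≤ 4c · f(c,π̂). The symmetric statement holds for right-reducible π with dright in place of dleft. -/
section Stmt7Aux

open Finset

/-- The defining set of `fExt`. -/
def fset (c : ℕ) {k : ℕ} (P : Fin k → Fin k → Bool) : Set ℕ :=
  { r | ∃ M : Fin c → Fin r → Bool, avoids M P ∧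
    ∀ j : Fin r, 2 * k ≤ (Finset.univ.filter (fun i : Fin c => M i j = true)).card }

lemma fExt_eq_sSup (c : ℕ) {k : ℕ} (P : Fin k → Fin k → Bool) :
    fExt c P = sSup (fset c P) := rfl

lemma zero_mem_fset (c : ℕ) {k : ℕ} (hk : 0 < k) (P : Fin k → Fin k → Bool) :
    0 ∈ fset c P := by
  refine ⟨fun _ j => j.elim0, ?_, fun j => j.elim0⟩
  rintro ⟨ci, ri, _, _, _⟩
  exact (ri ⟨0, hk⟩).elim0

lemma bddAbove_fset (c k : ℕ) (P : Fin (k+1) → Fin (k+1) → Bool) :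
    BddAbove (fset c P) := by
  refine ⟨2 ^ c * (k + 1), fun r hr => ?_⟩
  by_contra hlt
  push_neg at hlt
  obtain ⟨M, hav, hrows⟩ := hr
  classical
  obtain ⟨v, -, hv⟩ := Finset.exists_lt_card_fiber_of_mul_lt_card_of_maps_to
    (s := (Finset.univ : Finset (Fin r))) (t := (Finset.univ : Finset (Fin c → Bool)))
    (f := fun j i => M i j) (fun a _ => Finset.mem_univ _)
    (by simpa [Fintype.card_fun] using hlt)
  set D : Finset (Fin r) := Finset.univ.filter (fun j => (fun i => M i j) = v) with hD
  have hDle : k + 1 ≤ D.card := le_of_lt hv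
  have hDrow : ∀ j ∈ D, ∀ i, M i j = v i := by
    intro j hj i
    have := (Finset.mem_filter.1 hj).2
    exact congrFun this i
  -- the set of 1-entries of v has at least k+1 elements
  obtain ⟨j0, hj0⟩ := Finset.card_pos.1 (lt_of_lt_of_le (Nat.succ_pos k) hDle)
  have hOcard : k + 1 ≤ (Finset.univ.filter (fun i : Fin c => v i = true)).card := by
    have : (Finset.univ.filter (fun i : Fin c => v i = true)) =
        (Finset.univ.filter (fun i : Fin c => M i j0 = true)) := by
      apply Finset.filter_congr
      intro i _
      simp [hDrow j0 hj0 i]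
    rw [this]
    exact le_trans (by omega) (hrows j0)
  set O := Finset.univ.filter (fun i : Fin c => v i = true) with hO
  apply hav
  refine ⟨fun a => O.orderEmbOfFin rfl (Fin.castLE hOcard a),
          fun b => D.orderEmbOfFin rfl (Fin.castLE hDle b), ?_, ?_, ?_⟩
  · intro a b hab
    exact (O.orderEmbOfFin rfl).strictMono hab
  · intro a b hab
    exact (D.orderEmbOfFin rfl).strictMono hab
  · intro i j _
    have hmemO : O.orderEmbOfFin rfl (Fin.castLE hOcard i) ∈ O :=
      Finset.orderEmbOfFin_mem _ _ _
    have hmemD : D.orderEmbOfFin rfl (Fin.castLE hDle j) ∈ D :=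
      Finset.orderEmbOfFin_mem _ _ _
    have := hDrow _ hmemD (O.orderEmbOfFin rfl (Fin.castLE hOcard i))
    rw [this]
    exact (Finset.mem_filter.1 hmemO).2

lemma one_mem_fset {c k : ℕ} (hk : 1 ≤ k) (hc : 2 * (k + 1) ≤ c)
    (P : Fin (k+1) → Fin (k+1) → Bool) : 1 ∈ fset c P := by
  refine ⟨fun _ _ => true, ?_, ?_⟩
  · rintro ⟨ci, ri, _, hri, _⟩
    have h01 : (⟨0, by omega⟩ : Fin (k+1)) < ⟨1, by omega⟩ := by
      simp [Fin.lt_def]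
    have h2 := hri h01
    rw [Fin.lt_def] at h2
    have h0 := (ri 0).2
    have h1 := (ri 1).2
    omega
  · intro j
    simpa using hc

lemma one_le_fExt {c k : ℕ} (hk : 1 ≤ k) (hc : 2 * (k + 1) ≤ c)
    (P : Fin (k+1) → Fin (k+1) → Bool) : 1 ≤ fExt c P :=
  le_csSup (bddAbove_fset c k P) (one_mem_fset hk hc P)

lemma left_core (k : ℕ) (hk : 1 ≤ k)
    (π πh : Fin (k + 1) → Fin (k + 1) → Bool)
    (hπ : isPermMat π) (hπh : isPermMat πh)
    (hcorner : π 0 0 = true ∨ π 0 (Fin.last k) = true)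
    (Q : Fin k → Fin k → Bool) (hπQ : isDleft π Q) (hπhQ : isDleft πh Q)
    (c : ℕ) (hc : 2 * (k + 1) ≤ c) : fExt c π ≤ 4 * c * fExt c πh := by
  classical
  set t := fExt c πh with ht
  have ht1 : 1 ≤ t := one_le_fExt hk hc πh
  rw [fExt_eq_sSup]
  apply csSup_le ⟨0, zero_mem_fset c (by omega) π⟩
  intro r hr
  by_contra hbig
  push_neg at hbig
  obtain ⟨M, hav, hrows⟩ := hr
  apply hav
  have hrne : ∀ j : Fin r, (Finset.univ.filter (fun i : Fin c => M i j = true)).Nonempty := by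
    intro j
    apply Finset.card_pos.1
    have := hrows j
    omega
  set s : Fin r → Fin c :=
    fun j => (Finset.univ.filter (fun i : Fin c => M i j = true)).min' (hrne j) with hs
  have hsone : ∀ j, M (s j) j = true := fun j =>
    (Finset.mem_filter.1
      ((Finset.univ.filter (fun i : Fin c => M i j = true)).min'_mem (hrne j))).2
  have hsle : ∀ j i, M i j = true → s j ≤ i := by
    intro j i hij
    exact Finset.min'_le (Finset.univ.filter (fun i : Fin c => M i j = true)) i
      (Finset.mem_filter.2 ⟨Finset.mem_univ _, hij⟩)
  have hcard : (Finset.univ : Finset (Fin c)).card * (t + 1)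
      < (Finset.univ : Finset (Fin r)).card := by
    simp only [Finset.card_univ, Fintype.card_fin]
    have hcpos : 2 ≤ c := by omega
    have h1 : c * (t + 1) ≤ 4 * c * t := by nlinarith
    omega
  obtain ⟨x, -, hx⟩ := Finset.exists_lt_card_fiber_of_mul_lt_card_of_maps_to
    (f := s) (fun a _ => Finset.mem_univ _) hcard
  set C : Finset (Fin r) := Finset.univ.filter (fun j => s j = x) with hC
  have hCs : ∀ j ∈ C, s j = x := fun j hj => (Finset.mem_filter.1 hj).2
  have hCne : C.Nonempty := Finset.card_pos.1 (by omega)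
  obtain ⟨σ, hσ⟩ := hπ
  obtain ⟨r0, hr0, hQπ⟩ := hπQ
  obtain ⟨r0h, hr0h, hQπh⟩ := hπhQ
  -- the key construction: for any chosen extreme row jstar of the class C, there is a
  -- copy of πh inside the remaining rows of the class
  have key : ∀ jstar ∈ C, ∃ (ci : Fin (k+1) → Fin c) (ri : Fin (k+1) → Fin r),
      StrictMono ci ∧ StrictMono ri ∧ (∀ a b, πh a b = true → M (ci a) (ri b) = true) ∧
      (∀ b, ri b ∈ C.erase jstar) ∧ x ≤ ci 0 := by
    intro jstar hjstar
    set C' : Finset (Fin r) := C.erase jstar with hC'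
    have hC'card : t + 1 ≤ C'.card := by
      rw [hC', Finset.card_erase_of_mem hjstar]
      omega
    set emb := C'.orderEmbOfFin rfl with hemb
    have hNc : contains (fun i a => M i (emb a)) πh := by
      by_contra hN
      have hmem : C'.card ∈ fset c πh := by
        refine ⟨fun i a => M i (emb a), hN, ?_⟩
        intro a
        simpa using hrows (emb a)
      have := le_csSup (bddAbove_fset c k πh) hmem
      rw [← fExt_eq_sSup, ← ht] at this
      omega
    obtain ⟨ci, ri, hci, hri, hcp⟩ := hNc
    have hmemC' : ∀ b, emb (ri b) ∈ C' := fun b => Finset.orderEmbOfFin_mem _ _ _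
    refine ⟨ci, fun b => emb (ri b), hci, fun a b hab => emb.strictMono (hri hab),
      fun a b hab => hcp a b hab, fun b => hmemC' b, ?_⟩
    have hM0 : M (ci 0) (emb (ri r0h)) = true := hcp 0 r0h hr0h
    have := hsle (emb (ri r0h)) (ci 0) hM0
    rwa [hCs _ (Finset.mem_of_mem_erase (hmemC' r0h))] at this
  -- σ sends 0 to r0
  have hσ0r0 : σ 0 = r0 := (hσ 0 r0).1 hr0
  rcases hcorner with hπ00 | hπ0l
  · -- bottom-left corner
    have σ0 : σ 0 = 0 := (hσ 0 0).1 hπ00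
    have r00 : r0 = 0 := by rw [← hσ0r0, σ0]
    set jstar := C.min' hCne with hjstar
    obtain ⟨ci, ri, hci, hri, hcp, hmem, hx0⟩ := key jstar (C.min'_mem hCne)
    have hjlt : ∀ b, jstar < ri b := fun b =>
      lt_of_le_of_ne (C.min'_le _ (Finset.mem_of_mem_erase (hmem b)))
        (Ne.symm (Finset.ne_of_mem_erase (hmem b)))
    refine ⟨Fin.cases x (fun a => ci a.succ), Fin.cases jstar (fun b => ri (r0h.succAbove b)),
      ?_, ?_, ?_⟩
    · intro i j hij
      rcases Fin.eq_zero_or_eq_succ j with rfl | ⟨b, rfl⟩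
      · exact absurd hij (Fin.not_lt_zero i)
      · rcases Fin.eq_zero_or_eq_succ i with rfl | ⟨a, rfl⟩
        · simp only [Fin.cases_zero, Fin.cases_succ]
          exact lt_of_le_of_lt hx0 (hci (Fin.succ_pos b))
        · simp only [Fin.cases_succ]
          exact hci hij
    · intro i j hij
      rcases Fin.eq_zero_or_eq_succ j with rfl | ⟨b, rfl⟩
      · exact absurd hij (Fin.not_lt_zero i)
      · rcases Fin.eq_zero_or_eq_succ i with rfl | ⟨a, rfl⟩
        · simp only [Fin.cases_zero, Fin.cases_succ]
          exact hjlt _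
        · simp only [Fin.cases_succ]
          exact hri (Fin.succAbove_lt_succAbove_iff.2 (Fin.succ_lt_succ_iff.1 hij))
    · intro i j hπij
      rcases Fin.eq_zero_or_eq_succ j with rfl | ⟨b, rfl⟩
      · have hi0 : i = 0 := σ.injective (by rw [(hσ i 0).1 hπij, σ0])
        subst hi0
        simp only [Fin.cases_zero]
        have := hsone jstar
        rwa [hCs jstar (C.min'_mem hCne)] at this
      · have hine : i ≠ 0 := by
          intro h
          subst h
          have h2 : σ 0 = b.succ := (hσ _ _).1 hπij
          rw [σ0] at h2
          exact (Fin.succ_ne_zero b) h2.symm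
        obtain ⟨a, rfl⟩ := Fin.eq_succ_of_ne_zero hine
        have hQab : Q a b = true := by
          rw [hQπ a b, r00, Fin.succAbove_zero]
          exact hπij
        have hπhab : πh a.succ (r0h.succAbove b) = true := by
          rw [← hQπh a b]; exact hQab
        simpa only [Fin.cases_succ] using hcp _ _ hπhab
  · -- top-left corner
    have σ0 : σ 0 = Fin.last k := (hσ 0 _).1 hπ0l
    have r0l : r0 = Fin.last k := by rw [← hσ0r0, σ0]
    set jstar := C.max' hCne with hjstar
    obtain ⟨ci, ri, hci, hri, hcp, hmem, hx0⟩ := key jstar (C.max'_mem hCne)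
    have hjgt : ∀ b, ri b < jstar := fun b =>
      lt_of_le_of_ne (C.le_max' _ (Finset.mem_of_mem_erase (hmem b)))
        (Finset.ne_of_mem_erase (hmem b))
    refine ⟨Fin.cases x (fun a => ci a.succ),
      Fin.lastCases jstar (fun b => ri (r0h.succAbove b)), ?_, ?_, ?_⟩
    · intro i j hij
      rcases Fin.eq_zero_or_eq_succ j with rfl | ⟨b, rfl⟩
      · exact absurd hij (Fin.not_lt_zero i)
      · rcases Fin.eq_zero_or_eq_succ i with rfl | ⟨a, rfl⟩
        · simp only [Fin.cases_zero, Fin.cases_succ]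
          exact lt_of_le_of_lt hx0 (hci (Fin.succ_pos b))
        · simp only [Fin.cases_succ]
          exact hci hij
    · intro i j hij
      rcases Fin.eq_castSucc_or_eq_last j with ⟨b, rfl⟩ | rfl
      · have hine : i ≠ Fin.last k := Fin.ne_of_lt (lt_trans hij (Fin.castSucc_lt_last b))
        obtain ⟨a, rfl⟩ := Fin.exists_castSucc_eq.2 hine
        simp only [Fin.lastCases_castSucc]
        exact hri (Fin.succAbove_lt_succAbove_iff.2 (Fin.castSucc_lt_castSucc_iff.1 hij))
      · have hine : i ≠ Fin.last k := Fin.ne_of_lt hij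
        obtain ⟨a, rfl⟩ := Fin.exists_castSucc_eq.2 hine
        simp only [Fin.lastCases_castSucc, Fin.lastCases_last]
        exact hjgt _
    · intro i j hπij
      rcases Fin.eq_castSucc_or_eq_last j with ⟨b, rfl⟩ | rfl
      · have hine : i ≠ 0 := by
          intro h
          subst h
          have h2 : σ 0 = b.castSucc := (hσ _ _).1 hπij
          rw [σ0] at h2
          exact absurd h2.symm (Fin.ne_of_lt (Fin.castSucc_lt_last b))
        obtain ⟨a, rfl⟩ := Fin.eq_succ_of_ne_zero hine
        have hQab : Q a b = true := by
          rw [hQπ a b, r0l, Fin.succAbove_last]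
          exact hπij
        have hπhab : πh a.succ (r0h.succAbove b) = true := by
          rw [← hQπh a b]; exact hQab
        simpa only [Fin.cases_succ, Fin.lastCases_castSucc] using hcp _ _ hπhab
      · have hi0 : i = 0 := σ.injective (by rw [(hσ i _).1 hπij, σ0])
        subst hi0
        simp only [Fin.cases_zero, Fin.lastCases_last]
        have := hsone jstar
        rwa [hCs jstar (C.max'_mem hCne)] at this

/-- Reversing both coordinates of a matrix. -/
def rev2 {c r : ℕ} (M : Fin c → Fin r → Bool) : Fin c → Fin r → Bool :=
  fun i j => M i.rev j.rev

lemma rev2_rev2 {c r : ℕ} (M : Fin c → Fin r → Bool) : rev2 (rev2 M) = M := by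
  funext i j
  simp [rev2, Fin.rev_rev]

lemma contains_rev2 {c r a b : ℕ} (M : Fin c → Fin r → Bool) (P : Fin a → Fin b → Bool)
    (h : contains M P) : contains (rev2 M) (rev2 P) := by
  obtain ⟨ci, ri, hci, hri, hcp⟩ := h
  refine ⟨fun i => (ci i.rev).rev, fun j => (ri j.rev).rev, ?_, ?_, ?_⟩
  · intro i j hij
    exact Fin.rev_lt_rev.2 (hci (Fin.rev_lt_rev.2 hij))
  · intro i j hij
    exact Fin.rev_lt_rev.2 (hri (Fin.rev_lt_rev.2 hij))
  · intro i j hij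
    have := hcp i.rev j.rev hij
    simpa [rev2, Fin.rev_rev] using this

lemma avoids_rev2 {c r a b : ℕ} (M : Fin c → Fin r → Bool) (P : Fin a → Fin b → Bool)
    (h : avoids M P) : avoids (rev2 M) (rev2 P) := by
  intro hcon
  apply h
  have := contains_rev2 _ _ hcon
  rwa [rev2_rev2, rev2_rev2] at this

lemma fset_rev2 (c : ℕ) {k : ℕ} (P : Fin k → Fin k → Bool) :
    fset c (rev2 P) = fset c P := by
  classical
  ext r
  constructor <;> rintro ⟨M, hav, hrows⟩
  · refine ⟨rev2 M, by simpa [rev2_rev2] using avoids_rev2 _ _ hav, ?_⟩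
    intro j
    have hcard : (Finset.univ.filter (fun i : Fin c => rev2 M i j = true)).card
        = (Finset.univ.filter (fun i : Fin c => M i j.rev = true)).card := by
      apply Finset.card_equiv Fin.revPerm
      intro i
      simp [rev2, Fin.rev_rev]
      exact Finset.mem_filter.trans (and_iff_right (Finset.mem_univ _))
    rw [hcard]
    exact hrows j.rev
  · refine ⟨rev2 M, avoids_rev2 _ _ hav, ?_⟩
    intro j
    have hcard : (Finset.univ.filter (fun i : Fin c => rev2 M i j = true)).card
        = (Finset.univ.filter (fun i : Fin c => M i j.rev = true)).card := by
      apply Finset.card_equiv Fin.revPerm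
      intro i
      simp [rev2, Fin.rev_rev]
      exact Finset.mem_filter.trans (and_iff_right (Finset.mem_univ _))
    rw [hcard]
    exact hrows j.rev

lemma fExt_rev2 (c : ℕ) {k : ℕ} (P : Fin k → Fin k → Bool) :
    fExt c (rev2 P) = fExt c P := by
  rw [fExt_eq_sSup, fExt_eq_sSup, fset_rev2]

lemma isPermMat_rev2 {k : ℕ} (P : Fin k → Fin k → Bool) (h : isPermMat P) :
    isPermMat (rev2 P) := by
  obtain ⟨σ, hσ⟩ := h
  refine ⟨(Fin.revPerm.trans σ).trans Fin.revPerm, ?_⟩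
  intro i j
  have : rev2 P i j = true ↔ σ i.rev = j.rev := hσ i.rev j.rev
  rw [this]
  constructor
  · intro h2
    have := congrArg Fin.rev h2
    simpa [Fin.rev_rev] using this
  · intro h2
    have := congrArg Fin.rev h2
    simp only [Equiv.trans_apply, Fin.revPerm_apply] at h2 ⊢
    rw [← h2, Fin.rev_rev]

lemma isDright_rev2 {k : ℕ} (P : Fin (k+1) → Fin (k+1) → Bool) (Q : Fin k → Fin k → Bool)
    (h : isDright P Q) : isDleft (rev2 P) (rev2 Q) := by
  obtain ⟨r0, h1, h2⟩ := h
  refine ⟨r0.rev, ?_, ?_⟩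
  · show P (0 : Fin (k+1)).rev r0.rev.rev = true
    rwa [Fin.rev_zero, Fin.rev_rev]
  · intro i j
    show Q i.rev j.rev = P i.succ.rev (r0.rev.succAbove j).rev
    rw [h2 i.rev j.rev, Fin.rev_succ, ← Fin.succAbove_rev_right]

end Stmt7Aux

/-- Reduction rules: let `π` be a permutation matrix of length `k+1 ≥ 2`.
If `π` is left-reducible (a 1-entry at position `(1,1)` or `(1,k+1)`, column-first
with rows bottom-to-top) and `π̂` is any permutation matrix with
`dleft(π) = dleft(π̂)`, then `f(c,π) ≤ 4c · f(c,π̂)` for every `c ≥ 2(k+1)`;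
symmetrically for right-reducible `π` with `dright`. -/
theorem stmt7 (k : ℕ) (hk : 1 ≤ k)
    (π πh : Fin (k + 1) → Fin (k + 1) → Bool)
    (hπ : isPermMat π) (hπh : isPermMat πh) :
    ((π 0 0 = true ∨ π 0 (Fin.last k) = true) →
      ∀ Q : Fin k → Fin k → Bool, isDleft π Q → isDleft πh Q →
        ∀ c : ℕ, 2 * (k + 1) ≤ c → fExt c π ≤ 4 * c * fExt c πh)
    ∧ ((π (Fin.last k) 0 = true ∨ π (Fin.last k) (Fin.last k) = true) →
      ∀ Q : Fin k → Fin k → Bool, isDright π Q → isDright πh Q →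
        ∀ c : ℕ, 2 * (k + 1) ≤ c → fExt c π ≤ 4 * c * fExt c πh) := by
  constructor
  · intro hcorner Q hπQ hπhQ c hc
    exact left_core k hk π πh hπ hπh hcorner Q hπQ hπhQ c hc
  · intro hcorner Q hπQ hπhQ c hc
    have hcorner' : rev2 π 0 0 = true ∨ rev2 π 0 (Fin.last k) = true := by
      rcases hcorner with h | h
      · right
        show π (0 : Fin (k+1)).rev (Fin.last k).rev = true
        rwa [Fin.rev_zero, Fin.rev_last]
      · left
        show π (0 : Fin (k+1)).rev (0 : Fin (k+1)).rev = true
        rwa [Fin.rev_zero]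
    have hres := left_core k hk (rev2 π) (rev2 πh) (isPermMat_rev2 π hπ) (isPermMat_rev2 πh hπh)
      hcorner' (rev2 Q) (isDright_rev2 π Q hπQ) (isDright_rev2 πh Q hπhQ) c hc
    rwa [fExt_rev2, fExt_rev2] at hres
end

section
/- Let π be a permutation matrix of length k ≥ 2 that has a 1-entry at position (1,1) (writing matrices column-first with rows bottom-to-top), and let π̂ be any permutation matrix with dleft(π) = dleft(π̂). Then for every integer c > 2k, f(c,π) ≤ f(c−1,π) + f(c,π̂) + 2. -/
lemma avoids_comp {c r c' r' a b : ℕ} (M : Fin c → Fin r → Bool)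
    (P : Fin a → Fin b → Bool) (hM : avoids M P)
    (f : Fin c' → Fin c) (g : Fin r' → Fin r) (hf : StrictMono f) (hg : StrictMono g) :
    avoids (fun i j => M (f i) (g j)) P := by
  rintro ⟨ci, ri, h1, h2, h3⟩
  exact hM ⟨f ∘ ci, g ∘ ri, hf.comp h1, hg.comp h2, h3⟩

lemma zero_mem_fExtSet (c : ℕ) {k : ℕ} (P : Fin (k+1) → Fin (k+1) → Bool) :
    0 ∈ { r | ∃ M : Fin c → Fin r → Bool, avoids M P ∧
      ∀ j : Fin r, 2 * (k+1) ≤ (Finset.univ.filter (fun i : Fin c => M i j = true)).card } := by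
  refine ⟨fun _ j => j.elim0, ?_, fun j => j.elim0⟩
  rintro ⟨ci, ri, _, _, _⟩
  exact (ri 0).elim0

lemma bddAbove_fExtSet (c : ℕ) {k : ℕ} (P : Fin (k+1) → Fin (k+1) → Bool) :
    BddAbove { r | ∃ M : Fin c → Fin r → Bool, avoids M P ∧
      ∀ j : Fin r, 2 * (k+1) ≤ (Finset.univ.filter (fun i : Fin c => M i j = true)).card } := by
  classical
  refine ⟨k * 2 ^ c, ?_⟩
  rintro r ⟨M, hav, hrow⟩
  set f : Fin r → (Fin c → Bool) := fun j i => M i j with hf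
  have key : ∀ v ∈ Finset.image f Finset.univ,
      (Finset.filter (fun j => f j = v) Finset.univ).card ≤ k := by
    intro v hv
    by_contra hlt
    push_neg at hlt
    obtain ⟨j0, _, hj0⟩ := Finset.mem_image.mp hv
    have hC : k + 1 ≤ (Finset.univ.filter (fun i : Fin c => v i = true)).card := by
      rw [← hj0]
      exact le_trans (by omega) (hrow j0)
    have hT : k + 1 ≤ (Finset.filter (fun j => f j = v) Finset.univ).card := hlt
    set C := Finset.univ.filter (fun i : Fin c => v i = true) with hCdef
    set T := Finset.filter (fun j => f j = v) Finset.univ with hTdef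
    apply hav
    refine ⟨C.orderEmbOfCardLe hC, T.orderEmbOfCardLe hT, (C.orderEmbOfCardLe hC).strictMono,
      (T.orderEmbOfCardLe hT).strictMono, fun i j _ => ?_⟩
    have hmemC := Finset.orderEmbOfCardLe_mem C hC i
    have hmemT := Finset.orderEmbOfCardLe_mem T hT j
    have h1 : v ((C.orderEmbOfCardLe hC) i) = true := (Finset.mem_filter.mp hmemC).2
    have h2 : f ((T.orderEmbOfCardLe hT) j) = v := (Finset.mem_filter.mp hmemT).2
    calc M ((C.orderEmbOfCardLe hC) i) ((T.orderEmbOfCardLe hT) j)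
        = f ((T.orderEmbOfCardLe hT) j) ((C.orderEmbOfCardLe hC) i) := rfl
      _ = true := by rw [h2]; exact h1
  have hmain := Finset.card_le_mul_card_image (f := f) Finset.univ k key
  have himg : (Finset.image f Finset.univ).card ≤ 2 ^ c := by
    calc (Finset.image f Finset.univ).card ≤ Fintype.card (Fin c → Bool) :=
          Finset.card_le_univ _
      _ = 2 ^ c := by simp
  calc r = (Finset.univ : Finset (Fin r)).card := (Finset.card_fin r).symm
    _ ≤ k * (Finset.image f Finset.univ).card := hmain
    _ ≤ k * 2 ^ c := Nat.mul_le_mul_left k himg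

lemma strictMono_cons_aux {n m : ℕ} (x : Fin m) (f : Fin n → Fin m)
    (hf : StrictMono f) (hx : ∀ i, x < f i) :
    StrictMono (Fin.cons x f : Fin (n+1) → Fin m) := by
  intro a b hab
  induction b using Fin.cases with
  | zero => exact absurd hab (Fin.not_lt_zero a)
  | succ j =>
    induction a using Fin.cases with
    | zero => simpa using hx j
    | succ i =>
      simp only [Fin.cons_succ]
      exact hf (Fin.succ_lt_succ_iff.mp hab)

/-- Let `π` be a permutation matrix of length `k+1 ≥ 2` with a 1-entry at position
`(1,1)` (column-first, rows bottom-to-top), and let `π̂` be any permutation matrix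
with `dleft(π) = dleft(π̂)`. Then for every `c > 2(k+1)`,
`f(c,π) ≤ f(c−1,π) + f(c,π̂) + 2`. -/
theorem stmt8 (k : ℕ) (hk : 1 ≤ k)
    (π πh : Fin (k + 1) → Fin (k + 1) → Bool)
    (hπ : isPermMat π) (hπh : isPermMat πh)
    (h11 : π 0 0 = true)
    (Q : Fin k → Fin k → Bool) (hQ1 : isDleft π Q) (hQ2 : isDleft πh Q)
    (c : ℕ) (hc : 2 * (k + 1) < c) :
    fExt c π ≤ fExt (c - 1) π + fExt c πh + 2 := by
  classical
  obtain ⟨c', rfl⟩ : ∃ c', c = c' + 1 := ⟨c - 1, by omega⟩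
  have hc' : 2 * (k + 1) < c' + 1 := hc
  simp only [Nat.add_sub_cancel]
  -- unpack permutation structure
  obtain ⟨σ, hσ⟩ := hπ
  have hσ0 : σ 0 = 0 := (hσ 0 0).mp h11
  obtain ⟨r0', hr0', hQ1eq⟩ := hQ1
  have hr0'0 : r0' = (0 : Fin (k+1)) := by
    have := (hσ 0 r0').mp hr0'
    rw [← this, hσ0]
  subst hr0'0
  have hQπ : ∀ i j, Q i j = π i.succ j.succ := by
    intro i j
    rw [hQ1eq i j, Fin.zero_succAbove]
  obtain ⟨r0, hr0, hQ2eq⟩ := hQ2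
  -- main bound on each member of the set for (c'+1, π)
  apply csSup_le ⟨0, zero_mem_fExtSet _ π⟩
  rintro r ⟨M, hav, hrow⟩
  set A := Finset.filter (fun j : Fin r => ¬ (M 0 j = true)) Finset.univ with hAdef
  set B := Finset.filter (fun j : Fin r => M 0 j = true) Finset.univ with hBdef
  have hsplit : B.card + A.card = r := by
    rw [hAdef, hBdef, Finset.card_filter_add_card_filter_not, Finset.card_fin]
  -- Part 1: A.card ≤ fExt c' π
  have hA : A.card ≤ fExt c' π := by
    apply le_csSup (bddAbove_fExtSet c' π)
    set eA := A.orderEmbOfFin rfl with heA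
    refine ⟨fun i j => M i.succ (eA j), ?_, ?_⟩
    · exact avoids_comp M π hav _ _ Fin.strictMono_succ eA.strictMono
    · intro j
      have hmem : ¬ (M 0 (eA j) = true) :=
        (Finset.mem_filter.mp (Finset.orderEmbOfFin_mem A rfl j)).2
      have hzero : M 0 (eA j) = false := by
        cases h : M 0 (eA j)
        · rfl
        · exact absurd h hmem
      have := hrow (eA j)
      refine le_trans this ?_
      apply Finset.card_le_card_of_injOn (fun i : Fin (c'+1) => (⟨i.1 - 1, by omega⟩ : Fin c'))
      · intro i hi
        rw [Finset.mem_coe, Finset.mem_filter] at hi ⊢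
        refine ⟨Finset.mem_univ _, ?_⟩
        have hine : i ≠ 0 := by
          rintro rfl
          rw [hzero] at hi
          exact Bool.false_ne_true hi.2
        have hsq : (⟨i.1 - 1, by omega⟩ : Fin c').succ = i := by
          have : i.1 ≠ 0 := fun h => hine (Fin.ext h)
          simp only [Fin.succ, Fin.ext_iff]
          omega
        show M (⟨i.1 - 1, by omega⟩ : Fin c').succ (eA j) = true
        rw [hsq]
        exact hi.2
      · intro x hx y hy hxy
        simp only [Finset.coe_filter, Set.mem_setOf_eq] at hx hy
        have hxne : x ≠ 0 := by
          rintro rfl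
          rw [hzero] at hx
          exact Bool.false_ne_true hx.2
        have hyne : y ≠ 0 := by
          rintro rfl
          rw [hzero] at hy
          exact Bool.false_ne_true hy.2
        have hx1 : x.1 ≠ 0 := fun h => hxne (Fin.ext h)
        have hy1 : y.1 ≠ 0 := fun h => hyne (Fin.ext h)
        have := Fin.mk.injEq (x.1-1) _ (y.1-1) _ ▸ hxy
        apply Fin.ext
        have : x.1 - 1 = y.1 - 1 := by
          simpa [Fin.ext_iff] using hxy
        omega
  -- Part 2: B.card ≤ fExt (c'+1) πh + 1
  have hB : B.card ≤ fExt (c'+1) πh + 1 := by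
    rcases hm : B.card with _ | m
    · omega
    · have hge : m + 1 ≤ fExt (c'+1) πh + 1 := by
        have hmem : m ∈ { r' | ∃ M' : Fin (c'+1) → Fin r' → Bool, avoids M' πh ∧
            ∀ j : Fin r', 2 * (k+1) ≤
              (Finset.univ.filter (fun i : Fin (c'+1) => M' i j = true)).card } := by
          set eB := B.orderEmbOfFin hm with heB
          have heBmem : ∀ j, M 0 (eB j) = true := by
            intro j
            exact (Finset.mem_filter.mp (Finset.orderEmbOfFin_mem B hm j)).2
          refine ⟨fun i j => M i (eB j.succ), ?_, fun j => hrow (eB j.succ)⟩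
          rintro ⟨ci, ri, hci, hri, hcont⟩
          apply hav
          refine ⟨Fin.cons 0 (fun i : Fin k => ci i.succ),
            Fin.cons (eB 0) (fun j : Fin k => eB ((ri (r0.succAbove j)).succ)), ?_, ?_, ?_⟩
          · apply strictMono_cons_aux
            · intro a b h
              exact hci (Fin.succ_lt_succ_iff.mpr h)
            · intro i
              exact lt_of_le_of_lt (Fin.zero_le _) (hci (Fin.succ_pos i))
          · apply strictMono_cons_aux
            · intro a b h
              exact eB.strictMono (Fin.succ_lt_succ_iff.mpr
                (hri ((Fin.strictMono_succAbove r0) h)))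
            · intro j
              exact eB.strictMono (Fin.succ_pos _)
          · intro i j hij
            induction i using Fin.cases with
            | zero =>
              have : j = 0 := by
                have := (hσ 0 j).mp hij
                rw [← this, hσ0]
              subst this
              simp only [Fin.cons_zero]
              exact heBmem 0
            | succ i' =>
              have hjne : j ≠ 0 := by
                rintro rfl
                have h1 := (hσ i'.succ 0).mp hij
                have h2 : σ i'.succ = σ 0 := by rw [h1, hσ0]
                exact absurd (σ.injective h2) (Fin.succ_ne_zero i')
              induction j using Fin.cases with
              | zero => exact absurd rfl hjne
              | succ j' =>
                simp only [Fin.cons_succ]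
                apply hcont
                rw [← hQ2eq i' j', hQπ i' j']
                exact hij
        exact Nat.add_le_add_right (le_csSup (bddAbove_fExtSet _ πh) hmem) 1
      omega
  omega
end
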